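/- arXiv:2405.03979 — 2 statements merged into one kernel-verified Lean document; each statement's English description precedes it below -/
import Mathlib

section
/- Let F be a free group with normal subgroup R and G = F/R. For any n ≥ 1 there is a natural isomorphism D_n(G)/γ_n(G) ≅ (F ∩ (1 + r + f^n)) / (R·γ_n(F)), where f is the augmentation ideal of ℤ[F] and r = (R-1)ℤ[F]. -/
/-- The augmentation homomorphism of the integral group ring `ℤ[G]`. -/
noncomputable def aug (G : Type*) [Group G] : MonoidAlgebra ℤ G →ₐ[ℤ] ℤ :=
  MonoidAlgebra.lift ℤ ℤ G 1

/-- The augmentation ideal of `ℤ[G]`, viewed as a `ℤ`-submodule of `ℤ[G]`. -/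
noncomputable def augIdeal (G : Type*) [Group G] : Submodule ℤ (MonoidAlgebra ℤ G) :=
  (RingHom.ker (aug G).toRingHom).restrictScalars ℤ

/-- The relation ideal `r = (R - 1)·ℤ[G]` associated to a subgroup `R ≤ G`. -/
noncomputable def relIdeal (G : Type*) [Group G] (R : Subgroup G) :
    Submodule ℤ (MonoidAlgebra ℤ G) :=
  Submodule.span ℤ {x | ∃ ρ ∈ R, ∃ a : MonoidAlgebra ℤ G,
    x = (MonoidAlgebra.of ℤ G ρ - 1) * a}

/-!
The map `ℤ[F] → ℤ[G]` induced by `π : F → G` is surjective, carries `f^n` onto `g^n` (`g` the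
augmentation ideal of `ℤ[G]`), and has kernel exactly `r`: pushing `x` through `G` and back along
a set-theoretic section of `π` changes it only by elements `(ρ - 1)·a` with `ρ ∈ R`. Hence
`w - 1 ∈ r + f^n` if and only if `π w - 1 ∈ g^n`, i.e. `F ∩ (1 + r + f^n)` is the preimage of
`D_n(G)`. On the group side, `F → G → G/γ_n(G)` is surjective with kernel `R·γ_n(F)` because `π`
maps `γ_n(F)` onto `γ_n(G)`, and the resulting isomorphism `F/R·γ_n(F) ≅ G/γ_n(G)` restricts to
the images of these two subgroups.
-/

open MonoidAlgebra

section AugmentationIdeal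

variable {G : Type*} [Group G]

@[simp]
lemma aug_single (g : G) (c : ℤ) : aug G (single g c) = c := by
  simp [aug]

lemma mem_augIdeal_iff {x : MonoidAlgebra ℤ G} : x ∈ augIdeal G ↔ aug G x = 0 := Iff.rfl

lemma mul_mem_augIdeal_pow {n : ℕ} (hn : n ≠ 0) (u : MonoidAlgebra ℤ G)
    {z : MonoidAlgebra ℤ G} (hz : z ∈ augIdeal G ^ n) : u * z ∈ augIdeal G ^ n := by
  obtain ⟨m, rfl⟩ := Nat.exists_eq_succ_of_ne_zero hn
  rw [pow_succ'] at hz ⊢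
  refine Submodule.mul_induction_on hz (fun a ha b hb => ?_) fun x y hx hy => ?_
  · rw [← mul_assoc]
    refine Submodule.mul_mem_mul ?_ hb
    rw [mem_augIdeal_iff, map_mul, mem_augIdeal_iff.mp ha, mul_zero]
  · rw [mul_add]
    exact add_mem hx hy

end AugmentationIdeal

section OneAddSubgroup

variable {k G : Type*} [CommRing k] [Group G]

/-- `G ∩ (1 + I)` for a left ideal `I` of `k[G]`. -/
noncomputable def oneAddSubgroup (I : Submodule k (MonoidAlgebra k G))
    (hI : ∀ (u : MonoidAlgebra k G), ∀ z ∈ I, u * z ∈ I) : Subgroup G where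
  carrier := {g | of k G g - 1 ∈ I}
  one_mem' := by
    show of k G 1 - 1 ∈ I
    rw [map_one, sub_self]
    exact zero_mem I
  mul_mem' {a b} ha hb := by
    have h : of k G (a * b) - 1 = of k G a * (of k G b - 1) + (of k G a - 1) := by
      rw [map_mul]; noncomm_ring
    show of k G (a * b) - 1 ∈ I
    rw [h]
    exact add_mem (hI _ _ hb) ha
  inv_mem' {a} ha := by
    have h : of k G a⁻¹ - 1 = -(of k G a⁻¹ * (of k G a - 1)) := by
      rw [mul_sub, ← map_mul, inv_mul_cancel, map_one, mul_one, neg_sub]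
    show of k G a⁻¹ - 1 ∈ I
    rw [h]
    exact neg_mem (hI _ _ ha)

end OneAddSubgroup

noncomputable def dimensionSubgroup (G : Type*) [Group G] (n : ℕ) (hn : n ≠ 0) : Subgroup G :=
  oneAddSubgroup (augIdeal G ^ n) fun u _ hz => mul_mem_augIdeal_pow hn u hz

section MapDomain

variable {F H : Type*} [Group F] [Group H] (f : F →* H)

lemma aug_mapDomainAlgHom (x : MonoidAlgebra ℤ F) :
    aug H (mapDomainAlgHom ℤ ℤ f x) = aug F x := by
  have h : (aug H).comp (mapDomainAlgHom ℤ ℤ f) = aug F := by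
    ext g
    simp
  exact DFunLike.congr_fun h x

lemma comap_augIdeal :
    (augIdeal H).comap (mapDomainAlgHom ℤ ℤ f).toLinearMap = augIdeal F := by
  ext x
  rw [Submodule.mem_comap, AlgHom.toLinearMap_apply, mem_augIdeal_iff, mem_augIdeal_iff,
    aug_mapDomainAlgHom]

lemma mapDomainAlgHom_of (g : F) : mapDomainAlgHom ℤ ℤ f (of ℤ F g) = of ℤ H (f g) := by
  simp [of_apply]

variable {f}

lemma mapDomainAlgHom_surjective (hf : Function.Surjective f) :
    Function.Surjective (mapDomainAlgHom ℤ ℤ f) := by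
  intro y
  induction y using MonoidAlgebra.induction_linear with
  | zero => exact ⟨0, map_zero _⟩
  | add y z hy hz =>
    obtain ⟨a, rfl⟩ := hy
    obtain ⟨b, rfl⟩ := hz
    exact ⟨a + b, map_add _ a b⟩
  | single h c =>
    obtain ⟨g, rfl⟩ := hf h
    exact ⟨single g c, by simp⟩

lemma map_augIdeal_pow (hf : Function.Surjective f) (n : ℕ) :
    (augIdeal F ^ n).map (mapDomainAlgHom ℤ ℤ f).toLinearMap = augIdeal H ^ n := by
  rw [Submodule.map_pow, ← comap_augIdeal f,
    Submodule.map_comap_eq_of_surjective (mapDomainAlgHom_surjective hf)]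

lemma relIdeal_ker_le_ker_mapDomainAlgHom :
    relIdeal F f.ker ≤ LinearMap.ker (mapDomainAlgHom ℤ ℤ f).toLinearMap :=
  Submodule.span_le.mpr <| by
    rintro _ ⟨ρ, hρ, a, rfl⟩
    rw [SetLike.mem_coe, LinearMap.mem_ker, AlgHom.toLinearMap_apply, map_mul, map_sub, map_one,
      mapDomainAlgHom_of, MonoidHom.mem_ker.mp hρ, map_one, sub_self, zero_mul]

lemma sub_mapDomain_surjInv_mem_relIdeal (hf : Function.Surjective f) (x : MonoidAlgebra ℤ F) :
    x - mapDomain (Function.surjInv hf) (mapDomainAlgHom ℤ ℤ f x) ∈ relIdeal F f.ker := by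
  induction x using MonoidAlgebra.induction_linear with
  | zero => simp
  | add x y hx hy =>
    rw [map_add, mapDomain_add, add_sub_add_comm]
    exact add_mem hx hy
  | single g c =>
    set g' := Function.surjInv hf (f g)
    have hg' : f g' = f g := Function.surjInv_eq hf (f g)
    have h : single g c - single g' c = (of ℤ F (g * g'⁻¹) - 1) * single g' c := by
      rw [sub_mul, of_apply, single_mul_single, inv_mul_cancel_right, one_mul, one_mul]
    rw [mapDomainAlgHom_apply, mapDomain_single, mapDomain_single, h]
    refine Submodule.subset_span ⟨g * g'⁻¹, ?_, _, rfl⟩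
    rw [MonoidHom.mem_ker, map_mul, map_inv, hg', mul_inv_cancel]

lemma ker_mapDomainAlgHom (hf : Function.Surjective f) :
    LinearMap.ker (mapDomainAlgHom ℤ ℤ f).toLinearMap = relIdeal F f.ker := by
  refine le_antisymm (fun x hx => ?_) relIdeal_ker_le_ker_mapDomainAlgHom
  have hx : mapDomainAlgHom ℤ ℤ f x = 0 := hx
  simpa [hx] using sub_mapDomain_surjInv_mem_relIdeal hf x

lemma mem_relIdeal_sup_augIdeal_pow_iff (hf : Function.Surjective f) (n : ℕ)
    (x : MonoidAlgebra ℤ F) :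
    x ∈ relIdeal F f.ker ⊔ augIdeal F ^ n ↔ mapDomainAlgHom ℤ ℤ f x ∈ augIdeal H ^ n := by
  rw [← map_augIdeal_pow hf, ← ker_mapDomainAlgHom hf, sup_comm, ← Submodule.comap_map_eq,
    Submodule.mem_comap, AlgHom.toLinearMap_apply]

end MapDomain

section LowerCentralSeries

variable {F : Type*} [Group F] (R : Subgroup F) [R.Normal] (m : ℕ)

lemma ker_mk_lowerCentralSeries_comp_mk :
    ((QuotientGroup.mk' ((⊤ : Subgroup (F ⧸ R)).lowerCentralSeries m)).comp
      (QuotientGroup.mk' R)).ker = R ⊔ (⊤ : Subgroup F).lowerCentralSeries m := by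
  rw [← MonoidHom.comap_ker, QuotientGroup.ker_mk',
    ← Subgroup.map_top_of_surjective _ (QuotientGroup.mk'_surjective R),
    ← Subgroup.map_lowerCentralSeries, Subgroup.comap_map_eq, QuotientGroup.ker_mk', sup_comm]

noncomputable def quotientSupLowerCentralSeriesEquiv :
    F ⧸ (R ⊔ (⊤ : Subgroup F).lowerCentralSeries m) ≃*
      (F ⧸ R) ⧸ (⊤ : Subgroup (F ⧸ R)).lowerCentralSeries m :=
  (QuotientGroup.quotientMulEquivOfEq (ker_mk_lowerCentralSeries_comp_mk R m).symm).trans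
    (QuotientGroup.quotientKerEquivOfSurjective _
      ((QuotientGroup.mk'_surjective _).comp (QuotientGroup.mk'_surjective R)))

end LowerCentralSeries

/-- The quotients are modelled as images in `F/(R·γ_n(F))` and `G/γ_n(G)`; Mathlib's
`lowerCentralSeries` starts at `⊤`, so `γ_n` is `lowerCentralSeries (n - 1)`. -/
theorem dimensionQuotient_iso (α : Type*) (R : Subgroup (FreeGroup α)) [R.Normal]
    (n : ℕ) (hn : 1 ≤ n) :
    ∃ D : Subgroup (FreeGroup α ⧸ R),
      (∀ x : FreeGroup α ⧸ R, x ∈ D ↔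
          MonoidAlgebra.of ℤ (FreeGroup α ⧸ R) x - 1 ∈ augIdeal (FreeGroup α ⧸ R) ^ n) ∧
      ∃ W : Subgroup (FreeGroup α),
        (∀ w : FreeGroup α, w ∈ W ↔
            MonoidAlgebra.of ℤ (FreeGroup α) w - 1 ∈
              relIdeal (FreeGroup α) R ⊔ augIdeal (FreeGroup α) ^ n) ∧
        ∃ e : Subgroup.map
                (QuotientGroup.mk' (R ⊔ (⊤ : Subgroup (FreeGroup α)).lowerCentralSeries (n - 1))) W ≃*
              Subgroup.map
                (QuotientGroup.mk' ((⊤ : Subgroup (FreeGroup α ⧸ R)).lowerCentralSeries (n - 1))) D,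
          ∀ (w : FreeGroup α) (hw : w ∈ W),
            (e ⟨QuotientGroup.mk' (R ⊔ (⊤ : Subgroup (FreeGroup α)).lowerCentralSeries (n - 1)) w,
                  Subgroup.mem_map_of_mem _ hw⟩ :
                (FreeGroup α ⧸ R) ⧸ (⊤ : Subgroup (FreeGroup α ⧸ R)).lowerCentralSeries (n - 1)) =
              QuotientGroup.mk' ((⊤ : Subgroup (FreeGroup α ⧸ R)).lowerCentralSeries (n - 1))
                (QuotientGroup.mk' R w) := by
  have hπ := QuotientGroup.mk'_surjective R
  set D := dimensionSubgroup (FreeGroup α ⧸ R) n (by omega)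
  refine ⟨D, fun _ => Iff.rfl, D.comap (QuotientGroup.mk' R), fun w => ?_, ?_⟩
  · have h := mem_relIdeal_sup_augIdeal_pow_iff hπ n (of ℤ _ w - 1)
    rw [QuotientGroup.ker_mk'] at h
    rw [h, map_sub, map_one, mapDomainAlgHom_of]
    rfl
  · set E := quotientSupLowerCentralSeriesEquiv R (n - 1)
    have hmap : ((D.comap (QuotientGroup.mk' R)).map (QuotientGroup.mk' _)).map E.toMonoidHom =
        D.map (QuotientGroup.mk' _) := by
      rw [Subgroup.map_map, show E.toMonoidHom.comp (QuotientGroup.mk' _) =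
          (QuotientGroup.mk' _).comp (QuotientGroup.mk' R) from rfl, ← Subgroup.map_map,
        Subgroup.map_comap_eq_self_of_surjective hπ]
    exact ⟨(E.subgroupMap _).trans (MulEquiv.subgroupCongr hmap), fun _ _ => rfl⟩
end

section
/- Let C be a small category and 1 → F' → F → F'' → 1 a short exact sequence of functors C → Grp (i.e., pointwise short exact). Then the induced sequence of pointed sets Lim¹(F') → Lim¹(F) → Lim¹(F'') is exact: the class of a 1-cocycle a ∈ Z¹(C,F) maps to the basepoint of Lim¹(F'') if and only if it lies in the image of Lim¹(F') → Lim¹(F). -/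
open CategoryTheory

universe u

variable {C : Type u} [SmallCategory C]

/-- The set `Z¹(C,F)` of 1-cocycles of a small category `C` with coefficients in a
functor `F : C → Grp`. -/
def Cocycle (F : C ⥤ GrpCat.{u}) : Type u :=
  {a : ∀ ⦃c d : C⦄, (c ⟶ d) → F.obj d //
    ∀ ⦃b c d : C⦄ (β : b ⟶ c) (α : c ⟶ d), a (β ≫ α) = a α * F.map α (a β)}

/-- Two 1-cocycles are equivalent if they differ by the action of `∏_c F(c)`. -/
def cocycleEquiv (F : C ⥤ GrpCat.{u}) (a a' : Cocycle F) : Prop :=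
  ∃ x : ∀ c : C, F.obj c, ∀ ⦃c d : C⦄ (α : c ⟶ d),
    a'.1 α = (x d)⁻¹ * a.1 α * F.map α (x c)

/-- The pointed set `Lim¹ F = Z¹(C,F)/∏_c F(c)`. -/
def Lim1 (F : C ⥤ GrpCat.{u}) : Type u := Quot (cocycleEquiv F)

/-- The trivial 1-cocycle. -/
def oneCocycle (F : C ⥤ GrpCat.{u}) : Cocycle F :=
  ⟨fun _ _ _ => 1, by intros; simp⟩

/-- Pushing a 1-cocycle forward along a natural transformation `η : F ⟶ F'`. -/
def mapCocycle {F F' : C ⥤ GrpCat.{u}} (η : F ⟶ F') (a : Cocycle F) : Cocycle F' :=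
  ⟨fun _ d α => η.app d (a.1 α), by
    intro b c d β α
    have hnat : ∀ (z : F.obj c), η.app d (F.map α z) = F'.map α (η.app c z) := by
      intro z
      have := η.naturality α
      calc η.app d (F.map α z) = (F.map α ≫ η.app d) z := rfl
        _ = (η.app c ≫ F'.map α) z := by rw [this]
        _ = F'.map α (η.app c z) := rfl
    simp only [a.2 β α, map_mul, hnat]⟩

/-!
If `p_* a = 1^{x''}`, lift `x''` pointwise along `p` to `y`; then `a^y` takes values in
`ker p = ι(F')`, and its preimage in `F'` is again a cocycle because `ι` is injective, so
`[a] = [a^y]` comes from `Lim¹ F'`. Conversely `p ∘ ι = 1` and pushforward commutes with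
the action, so `p_*` of anything equivalent to `ι_* a'` is equivalent to `1`.
-/

namespace Cocycle

variable {F G : C ⥤ GrpCat.{u}}

@[ext]
lemma ext {a b : Cocycle F} (h : ∀ ⦃c d : C⦄ (α : c ⟶ d), a.1 α = b.1 α) : a = b :=
  Subtype.ext <| funext fun _ => funext fun _ => funext fun α => h α

/-- The action `a ↦ a^x` of `∏_c F(c)` on `Z¹(C,F)`. -/
def twist (a : Cocycle F) (x : ∀ c : C, F.obj c) : Cocycle F :=
  ⟨fun c d α => (x d)⁻¹ * a.1 α * F.map α (x c), by
    intro b c d β α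
    simp only [a.2 β α, Functor.map_comp, ConcreteCategory.comp_apply, map_mul, map_inv]
    group⟩

lemma cocycleEquiv_iff_exists_twist {a b : Cocycle F} :
    cocycleEquiv F a b ↔ ∃ x : ∀ c : C, F.obj c, b = a.twist x :=
  exists_congr fun _ => by rw [Cocycle.ext_iff]; rfl

lemma cocycleEquiv_twist (a : Cocycle F) (x : ∀ c : C, F.obj c) :
    cocycleEquiv F a (a.twist x) :=
  cocycleEquiv_iff_exists_twist.2 ⟨x, rfl⟩

lemma mapCocycle_twist (η : F ⟶ G) (a : Cocycle F) (x : ∀ c : C, F.obj c) :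
    mapCocycle η (a.twist x) = (mapCocycle η a).twist fun c => η.app c (x c) := by
  ext c d α
  simp [mapCocycle, twist]

end Cocycle

open Cocycle

lemma cocycleEquiv_equivalence (F : C ⥤ GrpCat.{u}) : Equivalence (cocycleEquiv F) where
  refl a := ⟨fun _ => 1, by simp⟩
  symm := by
    rintro a b ⟨x, hx⟩
    exact ⟨fun c => (x c)⁻¹, fun c d α => by simp [hx α, mul_assoc]⟩
  trans := by
    rintro a b b' ⟨x, hx⟩ ⟨y, hy⟩
    exact ⟨fun c => x c * y c, fun c d α => by simp [hy α, hx α, mul_assoc]⟩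

lemma quot_mk_cocycleEquiv_eq_iff {F : C ⥤ GrpCat.{u}} {a b : Cocycle F} :
    Quot.mk (cocycleEquiv F) a = Quot.mk (cocycleEquiv F) b ↔ cocycleEquiv F a b :=
  Quot.eq.trans (cocycleEquiv_equivalence F).eqvGen_iff

lemma cocycleEquiv.map {F G : C ⥤ GrpCat.{u}} (η : F ⟶ G) {a b : Cocycle F}
    (h : cocycleEquiv F a b) : cocycleEquiv G (mapCocycle η a) (mapCocycle η b) := by
  obtain ⟨x, rfl⟩ := cocycleEquiv_iff_exists_twist.1 h
  rw [mapCocycle_twist]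
  exact cocycleEquiv_twist _ _

lemma mapCocycle_mapCocycle_eq_one {F' F F'' : C ⥤ GrpCat.{u}} {ι : F' ⟶ F} {p : F ⟶ F''}
    (hpι : ∀ (c : C) (z : F'.obj c), p.app c (ι.app c z) = 1) (a : Cocycle F') :
    mapCocycle p (mapCocycle ι a) = oneCocycle F'' := by
  ext c d α
  simp [mapCocycle, oneCocycle, hpι]

lemma exists_mapCocycle_eq_of_mapCocycle_eq_one {F' F F'' : C ⥤ GrpCat.{u}} {ι : F' ⟶ F}
    {p : F ⟶ F''} (hinj : ∀ c : C, Function.Injective (ι.app c))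
    (hker : ∀ (c : C) (y : F.obj c), p.app c y = 1 → ∃ z : F'.obj c, ι.app c z = y)
    {a : Cocycle F} (ha : mapCocycle p a = oneCocycle F'') :
    ∃ a' : Cocycle F', mapCocycle ι a' = a := by
  have hval : ∀ ⦃c d : C⦄ (α : c ⟶ d), p.app d (a.1 α) = 1 := fun _ _ α =>
    congrArg (fun b : Cocycle F'' => b.1 α) ha
  choose a' ha' using fun (c d : C) (α : c ⟶ d) => hker d (a.1 α) (hval α)
  refine ⟨⟨fun c d α => a' c d α, fun b c d β α => hinj d ?_⟩,
    Cocycle.ext fun c d α => ha' c d α⟩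
  simp only [map_mul, ha', NatTrans.naturality_apply, a.2 β α]

/-- For a pointwise short exact sequence `1 → F' → F → F'' → 1` of functors `C → Grp`,
the sequence `Lim¹ F' → Lim¹ F → Lim¹ F''` of pointed sets is exact: the class of a
1-cocycle `a ∈ Z¹(C,F)` maps to the basepoint of `Lim¹ F''` iff it lies in the image
of `Lim¹ F' → Lim¹ F`. -/
theorem lim1_exact_of_ses (F' F F'' : C ⥤ GrpCat.{u}) (ι : F' ⟶ F) (p : F ⟶ F'')
    (hinj : ∀ c : C, Function.Injective (ι.app c))
    (hsurj : ∀ c : C, Function.Surjective (p.app c))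
    (hexact : ∀ (c : C) (y : F.obj c), (∃ z : F'.obj c, ι.app c z = y) ↔ p.app c y = 1) :
    ∀ a : Cocycle F,
      Quot.mk (cocycleEquiv F'') (mapCocycle p a) =
          Quot.mk (cocycleEquiv F'') (oneCocycle F'') ↔
        ∃ a' : Cocycle F',
          Quot.mk (cocycleEquiv F) (mapCocycle ι a') = Quot.mk (cocycleEquiv F) a := by
  intro a
  simp only [quot_mk_cocycleEquiv_eq_iff]
  constructor
  · intro h
    obtain ⟨x, hx⟩ := cocycleEquiv_iff_exists_twist.1 h
    choose y hy using fun c => hsurj c (x c)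
    have hay : mapCocycle p (a.twist y) = oneCocycle F'' := by
      simp only [mapCocycle_twist, hy, hx]
    obtain ⟨a', ha'⟩ :=
      exists_mapCocycle_eq_of_mapCocycle_eq_one hinj (fun c y => (hexact c y).2) hay
    exact ⟨a', ha' ▸ (cocycleEquiv_equivalence F).symm (cocycleEquiv_twist a y)⟩
  · rintro ⟨a', ha'⟩
    have hpι : ∀ (c : C) (z : F'.obj c), p.app c (ι.app c z) = 1 :=
      fun c z => (hexact c _).1 ⟨z, rfl⟩
    have hpa := ha'.map p
    rw [mapCocycle_mapCocycle_eq_one hpι] at hpa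
    exact (cocycleEquiv_equivalence F'').symm hpa
end
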